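/- arXiv:1907.10556 — 3 statements merged into one kernel-verified Lean document; each statement's English description precedes it below -/
import Mathlib

section
/- (Representer Theorem) Let H be a real Hilbert space, n ∈ ℕ, k₁,…,kₙ ∈ H, λ ≥ 0, and let L : ℝⁿ → [0,∞] be any function. Define J : H → [0,∞] by J(g) := L(⟪g,k₁⟫,…,⟪g,kₙ⟫) + λ‖g‖². If J attains its infimum over H at some g ∈ H, then J also attains its infimum at some element s of the finite-dimensional subspace V := span{k₁,…,kₙ}; namely, the orthogonal projection s of any minimizer g onto V satisfies J(s) ≤ J(g). -/
open scoped RealInnerProductSpace ENNReal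

/-- Representer theorem: if the regularized risk functional attains its minimum, it
attains it at the orthogonal projection of any minimizer onto the span of the
representers `k i`. -/
theorem stmt_4 {H : Type*} [NormedAddCommGroup H] [InnerProductSpace ℝ H]
    (n : ℕ) (k : Fin n → H) (lam : ℝ) (hlam : 0 ≤ lam)
    (L : (Fin n → ℝ) → ℝ≥0∞) (J : H → ℝ≥0∞)
    (hJ : ∀ g, J g = L (fun i => ⟪g, k i⟫) + ENNReal.ofReal (lam * ‖g‖ ^ 2))
    (g : H) (hg : ∀ h, J g ≤ J h) :
    ∃ s ∈ Submodule.span ℝ (Set.range k),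
      g - s ∈ (Submodule.span ℝ (Set.range k))ᗮ ∧ ∀ h, J s ≤ J h := by
  set V := Submodule.span ℝ (Set.range k) with hV
  haveI : FiniteDimensional ℝ V := FiniteDimensional.span_of_finite ℝ (Set.finite_range k)
  set s : H := (V.orthogonalProjectionOnto g : H) with hs
  have hmem : s ∈ V := (V.orthogonalProjectionOnto g).2
  have hperp : g - s ∈ Vᗮ := Submodule.sub_starProjection_mem_orthogonal (K := V) g
  refine ⟨s, hmem, hperp, fun h => ?_⟩
  have hinner : ∀ i, ⟪s, k i⟫ = ⟪g, k i⟫ := by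
    intro i
    have hk : k i ∈ V := Submodule.subset_span ⟨i, rfl⟩
    have h0 := hperp (k i) hk
    rw [inner_sub_right] at h0
    have := real_inner_comm (k i) s
    have := real_inner_comm (k i) g
    linarith
  have hnorm : ‖s‖ ≤ ‖g‖ := by
    calc ‖s‖ ≤ ‖V.orthogonalProjectionOnto‖ * ‖g‖ := by
          simpa [hs] using (V.orthogonalProjectionOnto).le_opNorm g
      _ ≤ 1 * ‖g‖ := by
          gcongr; exact Submodule.orthogonalProjectionOnto_norm_le V
      _ = ‖g‖ := one_mul _
  calc J s = L (fun i => ⟪s, k i⟫) + ENNReal.ofReal (lam * ‖s‖ ^ 2) := hJ s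
    _ = L (fun i => ⟪g, k i⟫) + ENNReal.ofReal (lam * ‖s‖ ^ 2) := by
        simp only [hinner]
    _ ≤ L (fun i => ⟪g, k i⟫) + ENNReal.ofReal (lam * ‖g‖ ^ 2) := by
        gcongr
    _ = J g := (hJ g).symm
    _ ≤ J h := hg h
end

section
/- Let H be a real Hilbert space, k₁,…,kₙ ∈ H, f ∈ H, λ > 0, and set yᵢ := ⟪f, kᵢ⟫ for i = 1,…,n. Suppose s ∈ H minimizes J(g) := Σ_{i=1}^n (⟪g,kᵢ⟫ − yᵢ)² + λ‖g‖² over H. Then |⟪s, kᵢ⟫ − yᵢ| ≤ √λ · ‖f‖ for every i = 1,…,n. -/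
open scoped RealInnerProductSpace

/-! Since `f` itself fits the data exactly, `J f = λ‖f‖²`; the minimizer satisfies `J s ≤ J f`, and
every single squared residual of `s` is bounded by `J s` because all the other terms of `J s`
are nonnegative. -/

lemma sq_le_of_sum_sq_add_le {ι : Type*} [Fintype ι] (r : ι → ℝ) {p c : ℝ} (hp : 0 ≤ p)
    (h : ∑ j, r j ^ 2 + p ≤ c) (i : ι) : r i ^ 2 ≤ c :=
  calc r i ^ 2 ≤ ∑ j, r j ^ 2 :=
        Finset.single_le_sum (fun j _ => sq_nonneg (r j)) (Finset.mem_univ i)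
    _ ≤ c := by linarith

lemma abs_le_sqrt_mul_of_sq_le_mul_sq {a lam b : ℝ} (hlam : 0 ≤ lam) (hb : 0 ≤ b)
    (h : a ^ 2 ≤ lam * b ^ 2) : |a| ≤ √lam * b := by
  rw [← Real.sqrt_sq hb, ← Real.sqrt_mul hlam]
  exact Real.abs_le_sqrt h

/-- Pointwise training error bound for regularized interpolation:
`|⟪s, kᵢ⟫ − yᵢ| ≤ √λ ‖f‖`. -/
theorem stmt_9 {H : Type*} [NormedAddCommGroup H] [InnerProductSpace ℝ H]
    (n : ℕ) (k : Fin n → H) (f : H) (lam : ℝ) (hlam : 0 < lam)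
    (y : Fin n → ℝ) (hy : ∀ i, y i = ⟪f, k i⟫)
    (J : H → ℝ)
    (hJ : ∀ g, J g = (∑ i, (⟪g, k i⟫ - y i) ^ 2) + lam * ‖g‖ ^ 2)
    (s : H) (hs : ∀ g, J s ≤ J g) :
    ∀ i, |⟪s, k i⟫ - y i| ≤ Real.sqrt lam * ‖f‖ := by
  intro i
  have hJf : J f = lam * ‖f‖ ^ 2 := by simp [hJ, hy]
  have hJs : ∑ j, (⟪s, k j⟫ - y j) ^ 2 + lam * ‖s‖ ^ 2 ≤ lam * ‖f‖ ^ 2 :=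
    hJf ▸ hJ s ▸ hs f
  exact abs_le_sqrt_mul_of_sq_le_mul_sq hlam.le (norm_nonneg f)
    (sq_le_of_sum_sq_add_le _ (by positivity) hJs i)
end

section
/- Let A ∈ ℝ^{n×n} be symmetric positive semidefinite, y ∈ ℝⁿ, ε ≥ 0, λ > 0. Consider the SVR dual objective D(α⁺,α⁻) := ¼(α⁻ − α⁺)ᵀA(α⁻ − α⁺) + ε·Σᵢ(αᵢ⁺ + αᵢ⁻) + Σᵢ yᵢ(αᵢ⁺ − αᵢ⁻) on the box [0, 1/λ]ⁿ × [0, 1/λ]ⁿ. Then: (i) D attains its minimum over the box; (ii) if (α⁺,α⁻) is any minimizer of D over the box, then setting α := ½(α⁻ − α⁺), ξᵢ⁺ := max(0, (Aα)ᵢ − yᵢ − ε), ξᵢ⁻ := max(0, yᵢ − (Aα)ᵢ − ε), the triple (α, ξ⁺, ξ⁻) minimizes the primal objective (1/λ)Σᵢ(ξᵢ⁺ + ξᵢ⁻) + αᵀAα over all (α, ξ⁺, ξ⁻) satisfying (Aα)ᵢ − yᵢ − ε ≤ ξᵢ⁺, yᵢ − (Aα)ᵢ − ε ≤ ξᵢ⁻,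 and ξᵢ⁺, ξᵢ⁻ ≥ 0 for all i. -/
open Matrix

private lemma svr_side_pos {c d t : ℝ} (hd : 0 ≤ d) (ht : 0 < t)
    (h : ∀ s, 0 ≤ s → s ≤ t → 0 ≤ s * c + d * s ^ 2) : 0 ≤ c := by
  by_contra hc
  push_neg at hc
  have hd1 : (0:ℝ) < d + 1 := by linarith
  set s := min t (-c / (d + 1)) with hs
  have hs0 : 0 < s := lt_min ht (by apply div_pos <;> linarith)
  have h1 := h s hs0.le (min_le_left _ _)
  have h2 : s * (d + 1) ≤ -c := by
    rw [← le_div_iff₀ hd1]; exact min_le_right _ _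
  nlinarith [mul_pos hs0 hs0, mul_le_mul_of_nonneg_right h2 hs0.le]

private lemma svr_side_neg {c d t : ℝ} (hd : 0 ≤ d) (ht : 0 < t)
    (h : ∀ s, -t ≤ s → s ≤ 0 → 0 ≤ s * c + d * s ^ 2) : c ≤ 0 := by
  have := svr_side_pos (c := -c) hd ht (fun s hs hst => by
    have := h (-s) (by linarith) (by linarith); nlinarith)
  linarith

private lemma svr_quadPerturb {n : ℕ} (A : Matrix (Fin n) (Fin n) ℝ)
    (hsymm : ∀ u v : Fin n → ℝ, u ⬝ᵥ A.mulVec v = v ⬝ᵥ A.mulVec u)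
    (u : Fin n → ℝ) (i : Fin n) (c : ℝ) :
    (u + c • (Pi.single i 1 : Fin n → ℝ)) ⬝ᵥ A.mulVec (u + c • (Pi.single i 1 : Fin n → ℝ)) =
      u ⬝ᵥ A.mulVec u + 2 * c * (A.mulVec u i) + A i i * c ^ 2 := by
  have he1 : u ⬝ᵥ A.mulVec (Pi.single i 1) = A.mulVec u i := by rw [hsymm]; simp
  have he2 : (Pi.single i 1 : Fin n → ℝ) ⬝ᵥ A.mulVec u = A.mulVec u i := by simp
  have he3 : (Pi.single i 1 : Fin n → ℝ) ⬝ᵥ A.mulVec (Pi.single i 1) = A i i := by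
    simp [mulVec_single]
  simp only [mulVec_add, mulVec_smul, dotProduct_add, add_dotProduct, dotProduct_smul,
    smul_dotProduct, smul_eq_mul, he1, he2, he3]
  ring

private lemma svr_deltaD {n : ℕ} (A : Matrix (Fin n) (Fin n) ℝ)
    (hsymm : ∀ u v : Fin n → ℝ, u ⬝ᵥ A.mulVec v = v ⬝ᵥ A.mulVec u)
    (y : Fin n → ℝ) (ε : ℝ) (D : (Fin n → ℝ) → (Fin n → ℝ) → ℝ)
    (hD : ∀ ap am, D ap am =
      (1 / 4) * ((am - ap) ⬝ᵥ A.mulVec (am - ap)) + ε * (∑ i, (ap i + am i)) +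
        ∑ i, y i * (ap i - am i))
    (ap am : Fin n → ℝ) (i : Fin n) (s : ℝ) :
    D (ap + s • (Pi.single i 1 : Fin n → ℝ)) am =
      D ap am + s * (ε + y i - (1 / 2) * (A.mulVec (am - ap) i)) + (A i i / 4) * s ^ 2 := by
  have e1 : am - (ap + s • (Pi.single i 1 : Fin n → ℝ))
      = (am - ap) + (-s) • (Pi.single i 1 : Fin n → ℝ) := by
    funext j; simp [Pi.single_apply]; split <;> ring
  have l1 : ∑ j, ((ap + s • (Pi.single i 1 : Fin n → ℝ)) j + am j)
      = (∑ j, (ap j + am j)) + s := by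
    have h : ∀ j, (ap + s • (Pi.single i 1 : Fin n → ℝ)) j + am j
        = (ap j + am j) + s * (if j = i then 1 else 0) := by
      intro j; simp [Pi.single_apply]; split <;> ring
    rw [Finset.sum_congr rfl fun j _ => h j, Finset.sum_add_distrib]
    simp
  have l2 : ∑ j, y j * ((ap + s • (Pi.single i 1 : Fin n → ℝ)) j - am j)
      = (∑ j, y j * (ap j - am j)) + y i * s := by
    have h : ∀ j, y j * ((ap + s • (Pi.single i 1 : Fin n → ℝ)) j - am j)
        = y j * (ap j - am j) + (if j = i then y j * s else 0) := by
      intro j; simp [Pi.single_apply]; split <;> ring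
    rw [Finset.sum_congr rfl fun j _ => h j, Finset.sum_add_distrib]
    simp
  rw [hD, hD, e1, svr_quadPerturb A hsymm, l1, l2]
  ring

private lemma svr_deltaD' {n : ℕ} (A : Matrix (Fin n) (Fin n) ℝ)
    (hsymm : ∀ u v : Fin n → ℝ, u ⬝ᵥ A.mulVec v = v ⬝ᵥ A.mulVec u)
    (y : Fin n → ℝ) (ε : ℝ) (D : (Fin n → ℝ) → (Fin n → ℝ) → ℝ)
    (hD : ∀ ap am, D ap am =
      (1 / 4) * ((am - ap) ⬝ᵥ A.mulVec (am - ap)) + ε * (∑ i, (ap i + am i)) +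
        ∑ i, y i * (ap i - am i))
    (ap am : Fin n → ℝ) (i : Fin n) (s : ℝ) :
    D ap (am + s • (Pi.single i 1 : Fin n → ℝ)) =
      D ap am + s * (ε - y i + (1 / 2) * (A.mulVec (am - ap) i)) + (A i i / 4) * s ^ 2 := by
  have e1 : (am + s • (Pi.single i 1 : Fin n → ℝ)) - ap
      = (am - ap) + s • (Pi.single i 1 : Fin n → ℝ) := by
    funext j; simp [Pi.single_apply]; split <;> ring
  have l1 : ∑ j, (ap j + (am + s • (Pi.single i 1 : Fin n → ℝ)) j)
      = (∑ j, (ap j + am j)) + s := by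
    have h : ∀ j, ap j + (am + s • (Pi.single i 1 : Fin n → ℝ)) j
        = (ap j + am j) + s * (if j = i then 1 else 0) := by
      intro j; simp [Pi.single_apply]; split <;> ring
    rw [Finset.sum_congr rfl fun j _ => h j, Finset.sum_add_distrib]
    simp
  have l2 : ∑ j, y j * (ap j - (am + s • (Pi.single i 1 : Fin n → ℝ)) j)
      = (∑ j, y j * (ap j - am j)) - y i * s := by
    have h : ∀ j, y j * (ap j - (am + s • (Pi.single i 1 : Fin n → ℝ)) j)
        = y j * (ap j - am j) + (if j = i then -(y j * s) else 0) := by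
      intro j; simp [Pi.single_apply]; split <;> ring
    rw [Finset.sum_congr rfl fun j _ => h j, Finset.sum_add_distrib]
    simp; ring
  rw [hD, hD, e1, svr_quadPerturb A hsymm, l1, l2]
  ring

private lemma svr_weakDual {n : ℕ} (A : Matrix (Fin n) (Fin n) ℝ) (hA : A.PosSemidef)
    (hsymm : ∀ u v : Fin n → ℝ, u ⬝ᵥ A.mulVec v = v ⬝ᵥ A.mulVec u)
    (y : Fin n → ℝ) (ε lam : ℝ)
    (bp bm β ηp ηm : Fin n → ℝ)
    (hbp : ∀ i, bp i ∈ Set.Icc (0:ℝ) (1/lam)) (hbm : ∀ i, bm i ∈ Set.Icc (0:ℝ) (1/lam))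
    (hfe : ∀ i, A.mulVec β i - y i - ε ≤ ηp i ∧ y i - A.mulVec β i - ε ≤ ηm i ∧
      0 ≤ ηp i ∧ 0 ≤ ηm i) :
    0 ≤ ((1/lam) * (∑ i, (ηp i + ηm i)) + β ⬝ᵥ A.mulVec β)
      + ((1/4) * ((bm - bp) ⬝ᵥ A.mulVec (bm - bp)) + ε * (∑ i, (bp i + bm i))
        + ∑ i, y i * (bp i - bm i)) := by
  have hv : 0 ≤ (β + (1/2:ℝ) • (bp - bm)) ⬝ᵥ A.mulVec (β + (1/2:ℝ) • (bp - bm)) := by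
    simpa using hA.dotProduct_mulVec_nonneg (β + (1/2:ℝ) • (bp - bm))
  have hexp : (β + (1/2:ℝ) • (bp - bm)) ⬝ᵥ A.mulVec (β + (1/2:ℝ) • (bp - bm))
      = β ⬝ᵥ A.mulVec β + (β ⬝ᵥ A.mulVec (bp - bm))
        + (1/4) * ((bp - bm) ⬝ᵥ A.mulVec (bp - bm)) := by
    simp only [mulVec_add, mulVec_smul, dotProduct_add, add_dotProduct, dotProduct_smul,
      smul_dotProduct, smul_eq_mul, hsymm (bp - bm) β]
    ring
  have hneg : (bm - bp) ⬝ᵥ A.mulVec (bm - bp) = (bp - bm) ⬝ᵥ A.mulVec (bp - bm) := by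
    rw [show bm - bp = -(bp - bm) from (neg_sub _ _).symm, mulVec_neg, dotProduct_neg,
      neg_dotProduct, neg_neg]
  have hcross : β ⬝ᵥ A.mulVec (bp - bm) = ∑ i, (bp i - bm i) * A.mulVec β i := by
    rw [hsymm]; rfl
  have key : ∀ i, (bp i - bm i) * A.mulVec β i
      ≤ y i * (bp i - bm i) + ε * (bp i + bm i) + (1/lam) * (ηp i + ηm i) := by
    intro i
    obtain ⟨h1, h2, h3, h4⟩ := hfe i
    obtain ⟨hb1, hb2⟩ := hbp i
    obtain ⟨hb3, hb4⟩ := hbm i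
    nlinarith [mul_nonneg hb1 (by linarith : (0:ℝ) ≤ ηp i - (A.mulVec β i - y i - ε)),
      mul_nonneg hb3 (by linarith : (0:ℝ) ≤ ηm i - (y i - A.mulVec β i - ε)),
      mul_nonneg (by linarith : (0:ℝ) ≤ 1/lam - bp i) h3,
      mul_nonneg (by linarith : (0:ℝ) ≤ 1/lam - bm i) h4]
  have hsum := Finset.sum_le_sum (fun i (_ : i ∈ Finset.univ) => key i)
  rw [Finset.sum_add_distrib, Finset.sum_add_distrib, ← Finset.mul_sum, ← Finset.mul_sum]
    at hsum
  linarith [hv, hexp, hneg, hcross, hsum]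

/-- SVR duality: the dual objective attains its minimum over the box
`[0, 1/λ]ⁿ × [0, 1/λ]ⁿ`, and any dual minimizer `(α⁺, α⁻)` yields, via
`α = ½(α⁻ − α⁺)` and the canonical slacks, a minimizer of the primal problem. -/
theorem stmt_14 {n : ℕ} (A : Matrix (Fin n) (Fin n) ℝ) (hA : A.PosSemidef)
    (y : Fin n → ℝ) (ε lam : ℝ) (hε : 0 ≤ ε) (hlam : 0 < lam)
    (D : (Fin n → ℝ) → (Fin n → ℝ) → ℝ)
    (hD : ∀ ap am, D ap am =
      (1 / 4) * ((am - ap) ⬝ᵥ A.mulVec (am - ap)) + ε * (∑ i, (ap i + am i)) +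
        ∑ i, y i * (ap i - am i))
    (Box : (Fin n → ℝ) → Prop)
    (hBox : ∀ v, Box v ↔ ∀ i, v i ∈ Set.Icc (0 : ℝ) (1 / lam))
    (P : (Fin n → ℝ) → (Fin n → ℝ) → (Fin n → ℝ) → ℝ)
    (hP : ∀ α ξp ξm, P α ξp ξm = (1 / lam) * (∑ i, (ξp i + ξm i)) + α ⬝ᵥ A.mulVec α)
    (Feas : (Fin n → ℝ) → (Fin n → ℝ) → (Fin n → ℝ) → Prop)
    (hFeas : ∀ α ξp ξm, Feas α ξp ξm ↔ ∀ i,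
      A.mulVec α i - y i - ε ≤ ξp i ∧ y i - A.mulVec α i - ε ≤ ξm i ∧
        0 ≤ ξp i ∧ 0 ≤ ξm i) :
    (∃ ap am, Box ap ∧ Box am ∧ ∀ bp bm, Box bp → Box bm → D ap am ≤ D bp bm) ∧
    (∀ ap am, Box ap → Box am → (∀ bp bm, Box bp → Box bm → D ap am ≤ D bp bm) →
      ∀ α ξp ξm, α = (fun i => (am i - ap i) / 2) →
        ξp = (fun i => max 0 (A.mulVec α i - y i - ε)) →
        ξm = (fun i => max 0 (y i - A.mulVec α i - ε)) →
        Feas α ξp ξm ∧ ∀ β ηp ηm, Feas β ηp ηm → P α ξp ξm ≤ P β ηp ηm) := by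
  have hsymm : ∀ u v : Fin n → ℝ, u ⬝ᵥ A.mulVec v = v ⬝ᵥ A.mulVec u := by
    intro u v
    rw [dotProduct_mulVec, ← mulVec_transpose,
      show Aᵀ = A from (A.conjTranspose_eq_transpose_of_trivial).symm.trans hA.1.eq]
    exact dotProduct_comm _ _
  have hI : (0:ℝ) ≤ 1 / lam := by positivity
  have hIpos : (0:ℝ) < 1 / lam := by positivity
  constructor
  · -- existence of a dual minimizer
    have boxIff : ∀ v : Fin n → ℝ, Box v ↔ v ∈ Set.Icc (0 : Fin n → ℝ) (fun _ => 1 / lam) := by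
      intro v; rw [hBox]; simp [Set.mem_Icc, Pi.le_def, forall_and]
    set S : Set ((Fin n → ℝ) × (Fin n → ℝ)) :=
      (Set.Icc (0 : Fin n → ℝ) (fun _ => 1 / lam)) ×ˢ
        (Set.Icc (0 : Fin n → ℝ) (fun _ => 1 / lam)) with hS
    have hSc : IsCompact S := (isCompact_Icc).prod (isCompact_Icc)
    have hSne : S.Nonempty := ⟨(0, 0), by
      constructor <;> exact Set.mem_Icc.mpr ⟨le_refl _, fun i => hI⟩⟩
    have hcont : ContinuousOn (fun p : (Fin n → ℝ) × (Fin n → ℝ) => D p.1 p.2) S := by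
      have heq : (fun p : (Fin n → ℝ) × (Fin n → ℝ) => D p.1 p.2) = fun p =>
          (1 / 4) * ((p.2 - p.1) ⬝ᵥ A.mulVec (p.2 - p.1)) + ε * (∑ i, (p.1 i + p.2 i)) +
            ∑ i, y i * (p.1 i - p.2 i) := funext fun p => hD p.1 p.2
      rw [heq]
      apply Continuous.continuousOn
      have c1 : ∀ i, Continuous fun p : (Fin n → ℝ) × (Fin n → ℝ) => p.1 i :=
        fun i => (continuous_apply i).comp continuous_fst
      have c2 : ∀ i, Continuous fun p : (Fin n → ℝ) × (Fin n → ℝ) => p.2 i :=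
        fun i => (continuous_apply i).comp continuous_snd
      have cd : ∀ i, Continuous fun p : (Fin n → ℝ) × (Fin n → ℝ) => (p.2 - p.1) i := by
        intro i; exact (c2 i).sub (c1 i)
      apply Continuous.add
      apply Continuous.add
      · apply Continuous.mul continuous_const
        simp only [dotProduct, mulVec]
        apply continuous_finset_sum
        intro i _
        exact (cd i).mul (continuous_finset_sum _ fun j _ => continuous_const.mul (cd j))
      · exact continuous_const.mul (continuous_finset_sum _ fun i _ => (c1 i).add (c2 i))
      · exact continuous_finset_sum _ fun i _ => continuous_const.mul ((c1 i).sub (c2 i))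
    obtain ⟨m, hmS, hmin⟩ := hSc.exists_isMinOn hSne hcont
    refine ⟨m.1, m.2, (boxIff _).mpr hmS.1, (boxIff _).mpr hmS.2, fun bp bm hbp hbm => ?_⟩
    exact hmin (Set.mk_mem_prod ((boxIff _).mp hbp) ((boxIff _).mp hbm))
  · -- any dual minimizer yields a primal minimizer
    intro ap am hap ham hmin α ξp ξm hα hξp hξm
    have hapi : ∀ i, ap i ∈ Set.Icc (0:ℝ) (1/lam) := (hBox ap).1 hap
    have hami : ∀ i, am i ∈ Set.Icc (0:ℝ) (1/lam) := (hBox am).1 ham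
    have hdiag : ∀ i, 0 ≤ A i i := by
      intro i
      have := hA.dotProduct_mulVec_nonneg (Pi.single i 1)
      simpa [mulVec_single] using this
    have hhalf : ∀ i, (1/2) * (A.mulVec (am - ap) i) = A.mulVec α i := by
      intro i
      have hu : am - ap = (2:ℝ) • α := by
        funext j; rw [hα]; simp; try ring
      rw [hu, mulVec_smul]; simp; try ring
    -- perturbed box membership helpers
    have boxPert : ∀ (v : Fin n → ℝ), (∀ j, v j ∈ Set.Icc (0:ℝ) (1/lam)) → ∀ (i : Fin n) s,
        0 ≤ v i + s → v i + s ≤ 1/lam →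
        Box (v + s • (Pi.single i 1 : Fin n → ℝ)) := by
      intro v hv i s h1 h2
      rw [hBox]
      intro j
      by_cases hj : j = i
      · subst hj
        simp only [Pi.add_apply, Pi.smul_apply, Pi.single_apply, if_pos rfl, smul_eq_mul,
          mul_one, if_true, Set.mem_Icc]
        exact ⟨h1, h2⟩
      · simpa [Pi.single_apply, hj] using hv j
    -- KKT facts
    have F1 : ∀ i, ε < A.mulVec α i - y i → ap i = 1/lam := by
      intro i hlt
      by_contra hne
      have hlt2 : ap i < 1/lam := lt_of_le_of_ne (hapi i).2 hne
      have := svr_side_pos (c := ε - (A.mulVec α i - y i)) (d := A i i / 4)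
        (t := 1/lam - ap i) (by linarith [hdiag i]) (by linarith) ?_
      · linarith
      intro s hs1 hs2
      have hb : Box (ap + s • (Pi.single i 1 : Fin n → ℝ)) :=
        boxPert ap hapi i s (by linarith [(hapi i).1]) (by linarith)
      have hm := hmin _ am hb ham
      rw [svr_deltaD A hsymm y ε D hD ap am i s] at hm
      have := hhalf i
      nlinarith [hm]
    have F2 : ∀ i, 0 < ap i → ε ≤ A.mulVec α i - y i := by
      intro i hpos
      have := svr_side_neg (c := ε - (A.mulVec α i - y i)) (d := A i i / 4)
        (t := ap i) (by linarith [hdiag i]) hpos ?_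
      · linarith
      intro s hs1 hs2
      have hb : Box (ap + s • (Pi.single i 1 : Fin n → ℝ)) :=
        boxPert ap hapi i s (by linarith) (by linarith [(hapi i).2])
      have hm := hmin _ am hb ham
      rw [svr_deltaD A hsymm y ε D hD ap am i s] at hm
      have := hhalf i
      nlinarith [hm]
    have F3 : ∀ i, A.mulVec α i - y i < -ε → am i = 1/lam := by
      intro i hlt
      by_contra hne
      have hlt2 : am i < 1/lam := lt_of_le_of_ne (hami i).2 hne
      have := svr_side_pos (c := ε + (A.mulVec α i - y i)) (d := A i i / 4)
        (t := 1/lam - am i) (by linarith [hdiag i]) (by linarith) ?_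
      · linarith
      intro s hs1 hs2
      have hb : Box (am + s • (Pi.single i 1 : Fin n → ℝ)) :=
        boxPert am hami i s (by linarith [(hami i).1]) (by linarith)
      have hm := hmin ap _ hap hb
      rw [svr_deltaD' A hsymm y ε D hD ap am i s] at hm
      have := hhalf i
      nlinarith [hm]
    have F4 : ∀ i, 0 < am i → A.mulVec α i - y i ≤ -ε := by
      intro i hpos
      have := svr_side_neg (c := ε + (A.mulVec α i - y i)) (d := A i i / 4)
        (t := am i) (by linarith [hdiag i]) hpos ?_
      · linarith
      intro s hs1 hs2
      have hb : Box (am + s • (Pi.single i 1 : Fin n → ℝ)) :=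
        boxPert am hami i s (by linarith) (by linarith [(hami i).2])
      have hm := hmin ap _ hap hb
      rw [svr_deltaD' A hsymm y ε D hD ap am i s] at hm
      have := hhalf i
      nlinarith [hm]
    -- complementary slackness
    have h1 : ∀ i, (1/lam) * ξp i + ap i * (ε - (A.mulVec α i - y i)) = 0 := by
      intro i
      have hξ : ξp i = max 0 (A.mulVec α i - y i - ε) := by rw [hξp]
      rcases le_or_gt (A.mulVec α i - y i) ε with h | h
      · have hmax : ξp i = 0 := by rw [hξ, max_eq_left (by linarith)]
        rcases (hapi i).1.eq_or_lt with he | he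
        · rw [hmax, ← he]; ring
        · have := F2 i he
          have : A.mulVec α i - y i = ε := le_antisymm h this
          rw [hmax, this]; ring
      · have hmax : ξp i = A.mulVec α i - y i - ε := by rw [hξ, max_eq_right (by linarith)]
        have := F1 i h
        rw [hmax, this]; ring
    have h2 : ∀ i, (1/lam) * ξm i + am i * (ε + (A.mulVec α i - y i)) = 0 := by
      intro i
      have hξ : ξm i = max 0 (y i - A.mulVec α i - ε) := by rw [hξm]
      rcases le_or_gt (-ε) (A.mulVec α i - y i) with h | h
      · have hmax : ξm i = 0 := by rw [hξ, max_eq_left (by linarith)]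
        rcases (hami i).1.eq_or_lt with he | he
        · rw [hmax, ← he]; ring
        · have := F4 i he
          have : A.mulVec α i - y i = -ε := le_antisymm this h
          rw [hmax, this]; ring
      · have hmax : ξm i = y i - A.mulVec α i - ε := by rw [hξ, max_eq_right (by linarith)]
        have := F3 i h
        rw [hmax, this]; ring
    -- strong duality
    have strong : P α ξp ξm + D ap am = 0 := by
      rw [hP, hD]
      have hu : am - ap = (2:ℝ) • α := by
        funext j; rw [hα]; simp; try ring
      have hQ : (am - ap) ⬝ᵥ A.mulVec (am - ap) = 4 * (α ⬝ᵥ A.mulVec α) := by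
        rw [hu, mulVec_smul, smul_dotProduct, dotProduct_smul, smul_eq_mul, smul_eq_mul]; ring
      have hdot : α ⬝ᵥ A.mulVec α = ∑ i, α i * A.mulVec α i := rfl
      rw [hQ, hdot]
      have comb : ∀ i, (1/lam) * (ξp i + ξm i) + 2 * (α i * A.mulVec α i)
          + ε * (ap i + am i) + y i * (ap i - am i) = 0 := by
        intro i
        have e2 : 2 * α i = am i - ap i := by rw [hα]; ring
        linear_combination h1 i + h2 i + A.mulVec α i * e2
      have hzero : ∑ i, ((1/lam) * (ξp i + ξm i) + 2 * (α i * A.mulVec α i)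
          + ε * (ap i + am i) + y i * (ap i - am i)) = 0 :=
        Finset.sum_eq_zero fun i _ => comb i
      rw [Finset.sum_add_distrib, Finset.sum_add_distrib, Finset.sum_add_distrib,
        ← Finset.mul_sum, ← Finset.mul_sum, ← Finset.mul_sum] at hzero
      linarith [hzero]
    constructor
    · rw [hFeas]
      intro i
      rw [hξp, hξm]
      exact ⟨le_max_right _ _, le_max_right _ _, le_max_left _ _, le_max_left _ _⟩
    · intro β ηp ηm hfe
      have wd := svr_weakDual A hA hsymm y ε lam ap am β ηp ηm hapi hami
        ((hFeas β ηp ηm).1 hfe)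
      have e4 := hP β ηp ηm
      have e5 := hD ap am
      linarith [wd, strong, e4, e5]
end
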